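/- arXiv:1909.00329 — 11 statements merged into one kernel-verified Lean document; each statement's English description precedes it below -/
import Mathlib

section
/- Fix i ∈ {0,1,…,K} and a ∈ 𝒮_i (note that a > 0 whenever i < K). Define b* by b*_k = √P for 1 ≤ k ≤ i and b*_k = 1/(a·h_k) for i < k ≤ K. Then b* is feasible (0 ≤ b*_k ≤ √P for all k), MSE(a, b*) = f_i(a), and for every feasible b one has MSE(a, b*) ≤ MSE(a, b). -/
open Finset

/-- Membership in the interval `𝒮ᵢ` (valid for `0 ≤ i ≤ K`):
`𝒮₀ = (1/(h₁√P), ∞)`, `𝒮ᵢ = (1/(h_{i+1}√P), 1/(hᵢ√P)]` for `1 ≤ i ≤ K-1`,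
`𝒮_K = [0, 1/(h_K√P)]`. -/
noncomputable def memS (K : ℕ) (h : ℕ → ℝ) (P : ℝ) (i : ℕ) (a : ℝ) : Prop :=
  (if i = K then 0 ≤ a else 1 / (h (i + 1) * Real.sqrt P) < a) ∧
  (if i = 0 then True else a ≤ 1 / (h i * Real.sqrt P))

/-- The computation MSE of the AirComp system. -/
noncomputable def MSE (K : ℕ) (h : ℕ → ℝ) (σ : ℝ) (a : ℝ) (b : ℕ → ℝ) : ℝ :=
  (∑ k ∈ Finset.Icc 1 K, (a * h k * b k - 1) ^ 2) + σ ^ 2 * a ^ 2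

/-- `f_i(a) = ∑_{k=1}^{i} (a h_k √P - 1)² + σ² a²`. -/
noncomputable def f (h : ℕ → ℝ) (P σ : ℝ) (i : ℕ) (a : ℝ) : ℝ :=
  (∑ k ∈ Finset.Icc 1 i, (a * h k * Real.sqrt P - 1) ^ 2) + σ ^ 2 * a ^ 2

/-- Feasibility of the Tx-scaling factors: `0 ≤ b_k ≤ √P` for all `1 ≤ k ≤ K`. -/
def feasible (K : ℕ) (P : ℝ) (b : ℕ → ℝ) : Prop :=
  ∀ k, 1 ≤ k → k ≤ K → 0 ≤ b k ∧ b k ≤ Real.sqrt P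

theorem stmt_0 (K : ℕ) (hK : 1 ≤ K) (h : ℕ → ℝ) (P σ : ℝ) (hP : 0 < P) (hσ : 0 < σ)
    (hpos : 0 < h 1) (hmono : ∀ k, 1 ≤ k → k < K → h k ≤ h (k + 1))
    (i : ℕ) (hiK : i ≤ K) (a : ℝ) (ha : memS K h P i a)
    (bstar : ℕ → ℝ)
    (hbstar : ∀ k, bstar k = if k ≤ i then Real.sqrt P else 1 / (a * h k)) :
    feasible K P bstar ∧
    MSE K h σ a bstar = f h P σ i a ∧
    ∀ b : ℕ → ℝ, feasible K P b → MSE K h σ a bstar ≤ MSE K h σ a b := by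

  obtain ⟨ha1, ha2⟩ := ha
  set s := Real.sqrt P with hs_def
  have hs : 0 < s := Real.sqrt_pos.mpr hP
  have mono2 : ∀ j k, 1 ≤ j → j ≤ k → k ≤ K → h j ≤ h k := by
    intro j k h1 hjk hkK
    induction k with
    | zero => omega
    | succ n ih =>
      rcases Nat.eq_or_lt_of_le hjk with heq | hlt
      · exact heq ▸ le_rfl
      · have h2 := hmono n (by omega) (by omega)
        have := ih (by omega) (by omega)
        linarith
  have hpos2 : ∀ k, 1 ≤ k → k ≤ K → 0 < h k := fun k h1 h2 =>
    lt_of_lt_of_le hpos (mono2 1 k le_rfl h1 h2)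
  have ha_pos : i < K → 0 < a := by
    intro hlt
    rw [if_neg (by omega)] at ha1
    have hp := hpos2 (i+1) (by omega) (by omega)
    have : 0 < 1 / (h (i+1) * s) := by positivity
    linarith
  have ha0 : 0 ≤ a := by
    rcases Nat.eq_or_lt_of_le hiK with heq | hlt
    · rwa [if_pos heq] at ha1
    · exact (ha_pos hlt).le
  have ha_up : ∀ k, 1 ≤ k → k ≤ i → a * h k * s ≤ 1 := by
    intro k h1 hki
    rw [if_neg (by omega : ¬ i = 0)] at ha2
    have hpi := hpos2 i (by omega) hiK
    have hpk := hpos2 k h1 (by omega)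
    have hmk : h k ≤ h i := mono2 k i h1 hki hiK
    have h1' : a * (h i * s) ≤ 1 := by
      calc a * (h i * s) ≤ (1 / (h i * s)) * (h i * s) := by
            apply mul_le_mul_of_nonneg_right ha2 (by positivity)
        _ = 1 := by field_simp
    nlinarith
  have ha_lo : ∀ k, i < k → k ≤ K → 1 < a * h k * s := by
    intro k hik hkK
    rw [if_neg (by omega : ¬ i = K)] at ha1
    have hpi := hpos2 (i+1) (by omega) (by omega)
    have hpk := hpos2 k (by omega) hkK
    have hmk : h (i+1) ≤ h k := mono2 (i+1) k (by omega) (by omega) hkK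
    have hapos : 0 < a := ha_pos (by omega)
    have h1' : 1 < a * (h (i+1) * s) := by
      rw [div_lt_iff₀ (by positivity)] at ha1
      linarith
    nlinarith
  have hfeas : feasible K P bstar := by
    intro k h1 hkK
    rw [hbstar k]
    by_cases hki : k ≤ i
    · rw [if_pos hki]; exact ⟨hs.le, le_rfl⟩
    · rw [if_neg hki]
      have hpk := hpos2 k h1 hkK
      have hapos : 0 < a := ha_pos (by omega)
      have hlo := ha_lo k (by omega) hkK
      constructor
      · positivity
      · rw [div_le_iff₀ (by positivity)]
        nlinarith
  have hterm : ∀ k ∈ Finset.Icc 1 K, (a * h k * bstar k - 1) ^ 2 =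
      if k ≤ i then (a * h k * s - 1) ^ 2 else 0 := by
    intro k hk
    rw [Finset.mem_Icc] at hk
    rw [hbstar k]
    by_cases hki : k ≤ i
    · rw [if_pos hki, if_pos hki]
    · rw [if_neg hki, if_neg hki]
      have hpk := hpos2 k hk.1 hk.2
      have hapos : 0 < a := ha_pos (by omega)
      have : a * h k * (1 / (a * h k)) = 1 := by field_simp
      rw [this]; ring
  have hsum : (∑ k ∈ Finset.Icc 1 K, (a * h k * bstar k - 1) ^ 2) =
      ∑ k ∈ Finset.Icc 1 i, (a * h k * s - 1) ^ 2 := by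
    rw [Finset.sum_congr rfl hterm]
    rw [Finset.sum_ite, Finset.sum_const_zero, add_zero]
    congr 1
    ext k
    simp only [Finset.mem_filter, Finset.mem_Icc]
    omega
  refine ⟨hfeas, ?_, ?_⟩
  · unfold MSE f
    rw [hsum]
  · intro b hb
    unfold MSE
    have : (∑ k ∈ Finset.Icc 1 K, (a * h k * bstar k - 1) ^ 2) ≤
        ∑ k ∈ Finset.Icc 1 K, (a * h k * b k - 1) ^ 2 := by
      apply Finset.sum_le_sum
      intro k hk
      rw [Finset.mem_Icc] at hk
      rw [hterm k (Finset.mem_Icc.mpr hk)]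
      by_cases hki : k ≤ i
      · rw [if_pos hki]
        obtain ⟨hb0, hb1⟩ := hb k hk.1 hk.2
        have hpk := hpos2 k hk.1 hk.2
        have hup := ha_up k hk.1 hki
        have hx0 : 0 ≤ a * h k * b k := by positivity
        have hxX : a * h k * b k ≤ a * h k * s := by
          rw [mul_assoc, mul_assoc]
          exact mul_le_mul_of_nonneg_left (mul_le_mul_of_nonneg_left hb1 hpk.le) ha0
        nlinarith
      · rw [if_neg hki]; positivity
    linarith
end

section
/- Fix i ∈ {1,…,K}. (a) If g_i ∈ 𝒮_i, then f_i(g_i) ≤ f_i(a) for all a ∈ 𝒮_i. (b) If g_i > 1/(h_i·√P), then 1/(h_i·√P) ∈ 𝒮_i and f_i(1/(h_i·√P)) ≤ f_i(a) for all a ∈ 𝒮_i. (c) If i < K and g_i ≤ 1/(h_{i+1}·√P), then the infimum of f_i over 𝒮_i equals f_i(1/(h_{i+1}·√P)) and this infimum is not attained at any point of 𝒮_i. -/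
open Finset

/-- `g₀ = 0` and `g_i = √P (∑_{k=1}^i h_k)/(σ² + P ∑_{k=1}^i h_k²)`. -/
noncomputable def g (h : ℕ → ℝ) (P σ : ℝ) (i : ℕ) : ℝ :=
  Real.sqrt P * (∑ k ∈ Finset.Icc 1 i, h k) /
    (σ ^ 2 + P * ∑ k ∈ Finset.Icc 1 i, (h k) ^ 2)

/-! `f_i` is the quadratic `A a² - 2 B a + i` with `A = σ² + P ∑ h_k² > 0` and `B = √P ∑ h_k`,
so `f_i(a) - f_i(b) = A (a - b)(a + b - 2 g_i)`: it decreases up to its vertex `g_i = B / A`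
and increases strictly after it. This gives (a) and (b) at once; in (c) the whole interval
`𝒮_i = (1/(h_{i+1}√P), 1/(h_i√P)]` lies right of the vertex, so `f_i` is strictly increasing
on it and, by continuity, its infimum is the value at the excluded left endpoint. -/

section Quadratic

variable (h : ℕ → ℝ) {P : ℝ} (σ : ℝ) (i : ℕ)

theorem f_eq_quadratic (hP : 0 ≤ P) (a : ℝ) :
    f h P σ i a = (σ ^ 2 + P * ∑ k ∈ Icc 1 i, h k ^ 2) * a ^ 2
      - 2 * (√P * ∑ k ∈ Icc 1 i, h k) * a + i := by
  have hterm : ∀ k ∈ Icc 1 i, (a * h k * √P - 1) ^ 2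
      = h k ^ 2 * (P * a ^ 2) - h k * (2 * √P * a) + 1 := fun k _ => by
    linear_combination a ^ 2 * h k ^ 2 * Real.sq_sqrt hP
  rw [f, sum_congr rfl hterm, sum_add_distrib, sum_sub_distrib, ← sum_mul, ← sum_mul,
    sum_const, Nat.card_Icc, nsmul_eq_mul, Nat.add_sub_cancel]
  ring

theorem f_sub_f (hP : 0 ≤ P) (hA : σ ^ 2 + P * ∑ k ∈ Icc 1 i, h k ^ 2 ≠ 0) (a b : ℝ) :
    f h P σ i a - f h P σ i b =
      (σ ^ 2 + P * ∑ k ∈ Icc 1 i, h k ^ 2) * (a - b) * (a + b - 2 * g h P σ i) := by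
  rw [f_eq_quadratic h σ i hP, f_eq_quadratic h σ i hP, g]
  field_simp
  ring

variable {σ} (hP : 0 ≤ P) (hA : 0 < σ ^ 2 + P * ∑ k ∈ Icc 1 i, h k ^ 2)
include hP hA

theorem f_g_le (a : ℝ) : f h P σ i (g h P σ i) ≤ f h P σ i a := by
  rw [← sub_nonneg, f_sub_f h σ i hP hA.ne', mul_assoc]
  exact mul_nonneg hA.le (by nlinarith [sq_nonneg (a - g h P σ i)])

theorem f_antitoneOn : AntitoneOn (f h P σ i) (Set.Iic (g h P σ i)) := by
  intro b hb a ha hba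
  rw [← sub_nonneg, f_sub_f h σ i hP hA.ne']
  exact mul_nonneg_of_nonpos_of_nonpos
    (mul_nonpos_of_nonneg_of_nonpos hA.le (sub_nonpos.2 hba))
    (by linarith [Set.mem_Iic.1 ha, Set.mem_Iic.1 hb])

theorem f_strictMonoOn : StrictMonoOn (f h P σ i) (Set.Ici (g h P σ i)) := by
  intro b hb a ha hba
  rw [← sub_pos, f_sub_f h σ i hP hA.ne']
  exact mul_pos (mul_pos hA (sub_pos.2 hba)) (by linarith [Set.mem_Ici.1 ha, Set.mem_Ici.1 hb])

end Quadratic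

theorem continuous_f (h : ℕ → ℝ) (P σ : ℝ) (i : ℕ) : Continuous (f h P σ i) := by
  unfold f
  fun_prop

theorem pos_of_le_of_chain {K : ℕ} {h : ℕ → ℝ} (hpos : 0 < h 1)
    (hmono : ∀ k, 1 ≤ k → k < K → h k < h (k + 1)) {k : ℕ} (hk1 : 1 ≤ k) (hkK : k ≤ K) :
    0 < h k := by
  induction k, hk1 using Nat.le_induction with
  | base => exact hpos
  | succ n hn ih => exact (ih (by omega)).trans (hmono n hn (by omega))

section Membership

variable {K : ℕ} {h : ℕ → ℝ} {P : ℝ} {i : ℕ}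

theorem setOf_memS_eq_Ioc (hi0 : i ≠ 0) (hiK : i < K) :
    {a | memS K h P i a} = Set.Ioc (1 / (h (i + 1) * √P)) (1 / (h i * √P)) := by
  ext a
  simp [memS, hi0, hiK.ne]

theorem le_of_memS (hi0 : i ≠ 0) {a : ℝ} (ha : memS K h P i a) : a ≤ 1 / (h i * √P) := by
  simpa [hi0] using ha.2

theorem one_div_lt_one_div_of_chain (hP : 0 < P) (hpos : 0 < h 1)
    (hmono : ∀ k, 1 ≤ k → k < K → h k < h (k + 1)) (hi1 : 1 ≤ i) (hiK : i < K) :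
    1 / (h (i + 1) * √P) < 1 / (h i * √P) := by
  have hsP : 0 < √P := Real.sqrt_pos.2 hP
  exact one_div_lt_one_div_of_lt (mul_pos (pos_of_le_of_chain hpos hmono hi1 hiK.le) hsP)
    (mul_lt_mul_of_pos_right (hmono i hi1 hiK) hsP)

theorem memS_one_div (hP : 0 < P) (hpos : 0 < h 1)
    (hmono : ∀ k, 1 ≤ k → k < K → h k < h (k + 1)) (hi1 : 1 ≤ i) (hiK : i ≤ K) :
    memS K h P i (1 / (h i * √P)) := by
  rcases hiK.eq_or_lt with rfl | hiK
  · have := pos_of_le_of_chain hpos hmono hi1 le_rfl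
    simp only [memS, if_true]
    exact ⟨by positivity, by simp⟩
  · change _ ∈ {a | memS K h P i a}
    rw [setOf_memS_eq_Ioc (by omega) hiK]
    exact ⟨one_div_lt_one_div_of_chain hP hpos hmono hi1 hiK, le_rfl⟩

end Membership

theorem stmt_1_general (K : ℕ) (h : ℕ → ℝ) (P σ : ℝ) (hP : 0 < P) (hσ : 0 < σ)
    (hpos : 0 < h 1) (hmono : ∀ k, 1 ≤ k → k < K → h k < h (k + 1))
    (i : ℕ) (hi1 : 1 ≤ i) (hiK : i ≤ K) :
    -- (a) if `g_i ∈ 𝒮_i`, then `g_i` minimizes `f_i` over `𝒮_i`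
    (memS K h P i (g h P σ i) →
      ∀ a : ℝ, memS K h P i a → f h P σ i (g h P σ i) ≤ f h P σ i a) ∧
    -- (b) if `g_i > 1/(h_i √P)`, then `1/(h_i √P) ∈ 𝒮_i` and it minimizes `f_i` over `𝒮_i`
    (1 / (h i * Real.sqrt P) < g h P σ i →
      memS K h P i (1 / (h i * Real.sqrt P)) ∧
      ∀ a : ℝ, memS K h P i a →
        f h P σ i (1 / (h i * Real.sqrt P)) ≤ f h P σ i a) ∧
    -- (c) if `i < K` and `g_i ≤ 1/(h_{i+1} √P)`, the infimum of `f_i` over `𝒮_i` equals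
    -- `f_i(1/(h_{i+1} √P))` and it is not attained at any point of `𝒮_i`
    (i < K → g h P σ i ≤ 1 / (h (i + 1) * Real.sqrt P) →
      IsGLB (f h P σ i '' {a : ℝ | memS K h P i a})
        (f h P σ i (1 / (h (i + 1) * Real.sqrt P))) ∧
      ∀ a : ℝ, memS K h P i a →
        f h P σ i (1 / (h (i + 1) * Real.sqrt P)) < f h P σ i a) := by
  have hA : 0 < σ ^ 2 + P * ∑ k ∈ Icc 1 i, h k ^ 2 := by positivity
  refine ⟨fun _ a _ => f_g_le h i hP.le hA a, fun hcg => ?_, fun hiK' hgd => ?_⟩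
  · refine ⟨memS_one_div hP hpos hmono hi1 hiK, fun a ha => ?_⟩
    have hac := le_of_memS (by omega) ha
    exact f_antitoneOn h i hP.le hA (hac.trans hcg.le) hcg.le hac
  have hS : {a | memS K h P i a} = _ := setOf_memS_eq_Ioc (by omega) hiK'
  have hdc := one_div_lt_one_div_of_chain hP hpos hmono hi1 hiK'
  have hmonoS : StrictMonoOn (f h P σ i) (Set.Icc (1 / (h (i + 1) * √P)) (1 / (h i * √P))) :=
    (f_strictMonoOn h i hP.le hA).mono fun a ha => hgd.trans ha.1
  refine ⟨?_, fun a ha => ?_⟩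
  · rw [hS]
    exact (isGLB_Ioc hdc).isGLB_of_tendsto (hmonoS.monotoneOn.mono Set.Ioc_subset_Icc_self)
      (Set.nonempty_Ioc.2 hdc) (continuous_f h P σ i).continuousWithinAt.tendsto
  · have ha' : a ∈ Set.Ioc _ _ := hS ▸ Set.mem_ofPred.2 ha
    exact hmonoS ⟨le_rfl, hdc.le⟩ (Set.Ioc_subset_Icc_self ha') ha'.1

theorem stmt_1 (K : ℕ) (hK : 1 ≤ K) (h : ℕ → ℝ) (P σ : ℝ) (hP : 0 < P) (hσ : 0 < σ)
    (hpos : 0 < h 1) (hmono : ∀ k, 1 ≤ k → k < K → h k < h (k + 1))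
    (i : ℕ) (hi1 : 1 ≤ i) (hiK : i ≤ K) :
    -- (a) if `g_i ∈ 𝒮_i`, then `g_i` minimizes `f_i` over `𝒮_i`
    (memS K h P i (g h P σ i) →
      ∀ a : ℝ, memS K h P i a → f h P σ i (g h P σ i) ≤ f h P σ i a) ∧
    -- (b) if `g_i > 1/(h_i √P)`, then `1/(h_i √P) ∈ 𝒮_i` and it minimizes `f_i` over `𝒮_i`
    (1 / (h i * Real.sqrt P) < g h P σ i →
      memS K h P i (1 / (h i * Real.sqrt P)) ∧
      ∀ a : ℝ, memS K h P i a →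
        f h P σ i (1 / (h i * Real.sqrt P)) ≤ f h P σ i a) ∧
    -- (c) if `i < K` and `g_i ≤ 1/(h_{i+1} √P)`, the infimum of `f_i` over `𝒮_i` equals
    -- `f_i(1/(h_{i+1} √P))` and it is not attained at any point of `𝒮_i`
    (i < K → g h P σ i ≤ 1 / (h (i + 1) * Real.sqrt P) →
      IsGLB (f h P σ i '' {a : ℝ | memS K h P i a})
        (f h P σ i (1 / (h (i + 1) * Real.sqrt P))) ∧
      ∀ a : ℝ, memS K h P i a →
        f h P σ i (1 / (h (i + 1) * Real.sqrt P)) < f h P σ i a) :=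
  stmt_1_general K h P σ hP hσ hpos hmono i hi1 hiK
end

section
/- (a) If 1 ≤ i < K and g_i ≤ 1/(h_{i+1}·√P), then for every a ∈ 𝒮_i there exists a′ ∈ 𝒮_{i+1} such that f_{i+1}(a′) < f_i(a). (b) If 1 ≤ i ≤ K and g_i > 1/(h_i·√P), then for every a ∈ 𝒮_i there exists a′ ∈ 𝒮_{i−1} such that f_{i−1}(a′) < f_i(a). -/
open Finset

private lemma quad_mono {A B x y : ℝ} (hA : 0 < A) (hxy : x < y) (hy : y ≤ B / A)
    (C : ℝ) : A * y ^ 2 - 2 * B * y + C < A * x ^ 2 - 2 * B * x + C := by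
  have hAy : y * A ≤ B := (le_div_iff₀ hA).mp hy
  have h1 : 0 < 2 * B - A * x - A * y := by nlinarith
  nlinarith [mul_pos (sub_pos.2 hxy) h1]

private lemma quad_mono' {A B x y : ℝ} (hA : 0 < A) (hxy : x < y) (hx : B / A ≤ x)
    (C : ℝ) : A * x ^ 2 - 2 * B * x + C < A * y ^ 2 - 2 * B * y + C := by
  have hAx : B ≤ x * A := (div_le_iff₀ hA).mp hx
  have h1 : 0 < A * x + A * y - 2 * B := by nlinarith
  nlinarith [mul_pos (sub_pos.2 hxy) h1]

private lemma f_succ (h : ℕ → ℝ) (P σ : ℝ) (n : ℕ) (a : ℝ) :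
    f h P σ (n + 1) a = f h P σ n a + (a * h (n + 1) * Real.sqrt P - 1) ^ 2 := by
  unfold f
  rw [Finset.sum_Icc_succ_top (by omega : 1 ≤ n + 1)]
  ring

private lemma f_eq (h : ℕ → ℝ) (P σ : ℝ) (hP : 0 ≤ P) (i : ℕ) (a : ℝ) :
    f h P σ i a = (σ ^ 2 + P * ∑ k ∈ Icc 1 i, (h k) ^ 2) * a ^ 2
      - 2 * (Real.sqrt P * ∑ k ∈ Icc 1 i, h k) * a + i := by
  induction i with
  | zero => simp [f]
  | succ n ih =>
      have hs : Real.sqrt P ^ 2 = P := Real.sq_sqrt hP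
      rw [f_succ, ih, Finset.sum_Icc_succ_top (by omega : 1 ≤ n + 1),
          Finset.sum_Icc_succ_top (by omega : 1 ≤ n + 1)]
      push_cast
      linear_combination (a * h (n + 1)) ^ 2 * hs

theorem stmt_2 (K : ℕ) (hK : 1 ≤ K) (h : ℕ → ℝ) (P σ : ℝ) (hP : 0 < P) (hσ : 0 < σ)
    (hpos : 0 < h 1) (hmono : ∀ k, 1 ≤ k → k < K → h k < h (k + 1)) :
    -- (a)
    (∀ i, 1 ≤ i → i < K → g h P σ i ≤ 1 / (h (i + 1) * Real.sqrt P) →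
      ∀ a : ℝ, memS K h P i a →
        ∃ a' : ℝ, memS K h P (i + 1) a' ∧ f h P σ (i + 1) a' < f h P σ i a) ∧
    -- (b)
    (∀ i, 1 ≤ i → i ≤ K → 1 / (h i * Real.sqrt P) < g h P σ i →
      ∀ a : ℝ, memS K h P i a →
        ∃ a' : ℝ, memS K h P (i - 1) a' ∧ f h P σ (i - 1) a' < f h P σ i a) := by
  have hsP : 0 < Real.sqrt P := Real.sqrt_pos.2 hP
  have hposk : ∀ k, 1 ≤ k → k ≤ K → 0 < h k := by
    intro k
    induction k with
    | zero => omega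
    | succ n ih =>
        intro _ hK'
        rcases Nat.eq_zero_or_pos n with hn | hn
        · subst hn; exact hpos
        · exact lt_trans (ih hn (by omega)) (hmono n hn (by omega))
  have hA : ∀ i : ℕ, 0 < σ ^ 2 + P * ∑ k ∈ Icc 1 i, (h k) ^ 2 := by
    intro i
    have : (0:ℝ) ≤ ∑ k ∈ Icc 1 i, (h k) ^ 2 := Finset.sum_nonneg fun k _ => sq_nonneg _
    nlinarith
  constructor
  · -- part (a)
    intro i hi1 hiK hg a ha
    have hhi1 : 0 < h (i + 1) := hposk (i + 1) (by omega) (by omega)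
    set a' : ℝ := 1 / (h (i + 1) * Real.sqrt P) with ha'def
    have ha'pos : 0 < a' := by positivity
    unfold memS at ha
    rw [if_neg (by omega : ¬ i = K), if_neg (by omega : ¬ i = 0)] at ha
    obtain ⟨haL, haR⟩ := ha
    have hmem : memS K h P (i + 1) a' := by
      unfold memS
      refine ⟨?_, ?_⟩
      · by_cases hiK' : i + 1 = K
        · rw [if_pos hiK']; exact ha'pos.le
        · rw [if_neg hiK']
          have h2 : 0 < h (i + 2) := hposk _ (by omega) (by omega)
          have hlt : h (i + 1) < h (i + 2) := hmono (i + 1) (by omega) (by omega)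
          rw [ha'def]
          apply one_div_lt_one_div_of_lt (by positivity)
          nlinarith
      · rw [if_neg (by omega : ¬ i + 1 = 0)]
    have key : f h P σ i a' < f h P σ i a := by
      rw [f_eq h P σ hP.le, f_eq h P σ hP.le]
      exact quad_mono' (hA i) haL hg _
    have hzero : a' * h (i + 1) * Real.sqrt P = 1 := by
      rw [ha'def]; field_simp
    refine ⟨a', hmem, ?_⟩
    rw [f_succ, hzero]
    simpa using key
  · -- part (b)
    intro i hi1 hiK hg a ha
    obtain ⟨j, rfl⟩ : ∃ j, i = j + 1 := ⟨i - 1, by omega⟩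
    unfold memS at ha
    rw [if_neg (by omega : ¬ j + 1 = 0)] at ha
    have hR : a ≤ 1 / (h (j + 1) * Real.sqrt P) := ha.2
    have hhj1 : 0 < h (j + 1) := hposk (j + 1) (by omega) (by omega)
    set t : ℝ := if j = 0 then g h P σ (j + 1) else 1 / (h j * Real.sqrt P) with htdef
    set a' : ℝ := min (g h P σ (j + 1)) t with ha'def
    have hRt : 1 / (h (j + 1) * Real.sqrt P) < t := by
      rw [htdef]
      by_cases hj0 : j = 0
      · rw [if_pos hj0]; exact hg
      · rw [if_neg hj0]
        have hj1 : 1 ≤ j := by omega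
        have hhj : 0 < h j := hposk j hj1 (by omega)
        have hlt : h j < h (j + 1) := hmono j hj1 (by omega)
        apply one_div_lt_one_div_of_lt (by positivity)
        nlinarith
    have hRa' : 1 / (h (j + 1) * Real.sqrt P) < a' := lt_min hg hRt
    have haa' : a < a' := lt_of_le_of_lt hR hRa'
    have ha'g : a' ≤ g h P σ (j + 1) := min_le_left _ _
    have hmem : memS K h P j a' := by
      unfold memS
      refine ⟨?_, ?_⟩
      · rw [if_neg (by omega : ¬ j = K)]; exact hRa'
      · by_cases hj0 : j = 0
        · rw [if_pos hj0]; trivial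
        · rw [if_neg hj0]
          have : t = 1 / (h j * Real.sqrt P) := by rw [htdef, if_neg hj0]
          rw [← this]; exact min_le_right _ _
    have key : f h P σ (j + 1) a' < f h P σ (j + 1) a := by
      rw [f_eq h P σ hP.le, f_eq h P σ hP.le]
      exact quad_mono (hA (j + 1)) haa' ha'g _
    have hdrop : f h P σ j a' ≤ f h P σ (j + 1) a' := by
      rw [f_succ]
      nlinarith [sq_nonneg (a' * h (j + 1) * Real.sqrt P - 1)]
    exact ⟨a', hmem, lt_of_le_of_lt hdrop key⟩
end

section
/- For every a > 1/(h_1·√P) and every feasible b, there exist a′ with 0 ≤ a′ ≤ 1/(h_1·√P) and a feasible b′ such that MSE(a′, b′) < MSE(a, b). Consequently, any global minimizer (a*, b*) of MSE over a ≥ 0 and feasible b satisfies a* ∉ 𝒮_0, i.e., a* ≤ 1/(h_1·√P), so at least one sensor transmits with maximum power. -/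
/-
Take `a' = 1/(h₁√P)` and let every sensor invert its channel, `b'ₖ = h₁√P / hₖ`. This is feasible
because `h₁ ≤ hₖ`, and it makes every misalignment term `a' hₖ b'ₖ - 1` vanish, so the MSE collapses
to the noise term `σ² a'²`. For `a > a'` this is strictly below `σ² a² ≤ MSE(a, b)`.
-/

open Finset

lemma monotoneOn_Icc_of_le_succ {β : Type*} [Preorder β] {f : ℕ → β} {K : ℕ}
    (hf : ∀ k, 1 ≤ k → k < K → f k ≤ f (k + 1)) : MonotoneOn f (Set.Icc 1 K) :=
  monotoneOn_of_le_succ Set.ordConnected_Icc fun k _ hk hk' => by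
    rw [Order.succ_eq_add_one] at hk' ⊢
    exact hf k hk.1 (Nat.lt_of_succ_le hk'.2)

lemma noise_le_MSE (K : ℕ) (h : ℕ → ℝ) (σ a : ℝ) (b : ℕ → ℝ) :
    σ ^ 2 * a ^ 2 ≤ MSE K h σ a b :=
  le_add_of_nonneg_left (sum_nonneg fun _ _ => sq_nonneg _)

lemma MSE_eq_noise_of_aligned {K : ℕ} {h : ℕ → ℝ} {σ a : ℝ} {b : ℕ → ℝ}
    (hab : ∀ k ∈ Icc 1 K, a * h k * b k = 1) : MSE K h σ a b = σ ^ 2 * a ^ 2 := by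
  rw [MSE, sum_eq_zero fun k hk => by rw [hab k hk, sub_self, zero_pow two_ne_zero], zero_add]

/-- Channel inversion, normalised so that the weakest sensor transmits at full power. -/
noncomputable def channelInversion (h : ℕ → ℝ) (P : ℝ) (k : ℕ) : ℝ :=
  h 1 * Real.sqrt P / h k

section ChannelInversion

variable {K : ℕ} {h : ℕ → ℝ} {P : ℝ}

lemma feasible_channelInversion (hpos : 0 < h 1) (hmono : MonotoneOn h (Set.Icc 1 K)) :
    feasible K P (channelInversion h P) := by
  intro k hk hkK
  have h1k : h 1 ≤ h k :=
    hmono ⟨le_rfl, hk.trans hkK⟩ ⟨hk, hkK⟩ hk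
  have hk_pos : 0 < h k := hpos.trans_le h1k
  refine ⟨by unfold channelInversion; positivity, ?_⟩
  rw [channelInversion, div_le_iff₀ hk_pos, mul_comm]
  exact mul_le_mul_of_nonneg_left h1k (Real.sqrt_nonneg P)

lemma MSE_channelInversion (σ : ℝ) (hP : 0 < P) (hpos : 0 < h 1)
    (hmono : MonotoneOn h (Set.Icc 1 K)) :
    MSE K h σ (1 / (h 1 * Real.sqrt P)) (channelInversion h P) =
      σ ^ 2 * (1 / (h 1 * Real.sqrt P)) ^ 2 := by
  refine MSE_eq_noise_of_aligned fun k hk => ?_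
  rw [mem_Icc] at hk
  have hk_pos : 0 < h k :=
    hpos.trans_le (hmono ⟨le_rfl, hk.1.trans hk.2⟩ hk hk.1)
  have hsqrt : 0 < Real.sqrt P := Real.sqrt_pos.mpr hP
  unfold channelInversion
  field_simp

lemma exists_MSE_lt_of_gt {σ : ℝ} (hP : 0 < P) (hσ : 0 < σ)
    (hpos : 0 < h 1) (hmono : MonotoneOn h (Set.Icc 1 K)) {a : ℝ}
    (ha : 1 / (h 1 * Real.sqrt P) < a) (b : ℕ → ℝ) :
    ∃ a' : ℝ, 0 ≤ a' ∧ a' ≤ 1 / (h 1 * Real.sqrt P) ∧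
      ∃ b' : ℕ → ℝ, feasible K P b' ∧ MSE K h σ a' b' < MSE K h σ a b := by
  refine ⟨_, by positivity, le_rfl, _, feasible_channelInversion hpos hmono, ?_⟩
  calc MSE K h σ _ (channelInversion h P) = σ ^ 2 * (1 / (h 1 * Real.sqrt P)) ^ 2 :=
        MSE_channelInversion σ hP hpos hmono
    _ < σ ^ 2 * a ^ 2 := by gcongr
    _ ≤ MSE K h σ a b := noise_le_MSE K h σ a b

end ChannelInversion

theorem stmt_3_general (K : ℕ) (h : ℕ → ℝ) (P σ : ℝ) (hP : 0 < P) (hσ : 0 < σ)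
    (hpos : 0 < h 1) (hmono : ∀ k, 1 ≤ k → k < K → h k ≤ h (k + 1)) :
    -- for every `a ∈ 𝒮₀` and feasible `b` there is a strictly better pair with
    -- `0 ≤ a' ≤ 1/(h₁√P)`
    (∀ a : ℝ, 1 / (h 1 * Real.sqrt P) < a → ∀ b : ℕ → ℝ, feasible K P b →
      ∃ a' : ℝ, 0 ≤ a' ∧ a' ≤ 1 / (h 1 * Real.sqrt P) ∧
        ∃ b' : ℕ → ℝ, feasible K P b' ∧ MSE K h σ a' b' < MSE K h σ a b) ∧
    -- consequently, any global minimizer over `a ≥ 0` and feasible `b` has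
    -- `a* ≤ 1/(h₁√P)`, i.e. `a* ∉ 𝒮₀`
    (∀ astar : ℝ, ∀ bstar : ℕ → ℝ, 0 ≤ astar → feasible K P bstar →
      (∀ a : ℝ, 0 ≤ a → ∀ b : ℕ → ℝ, feasible K P b →
        MSE K h σ astar bstar ≤ MSE K h σ a b) →
      astar ≤ 1 / (h 1 * Real.sqrt P)) := by
  have improve := fun a (ha : 1 / (h 1 * Real.sqrt P) < a) b (_ : feasible K P b) =>
    exists_MSE_lt_of_gt (σ := σ) hP hσ hpos (monotoneOn_Icc_of_le_succ hmono) ha b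
  refine ⟨improve, fun astar bstar _ hbstar hmin => not_lt.mp fun hgt => ?_⟩
  obtain ⟨a', ha'0, -, b', hb', hlt⟩ := improve astar hgt bstar hbstar
  exact (hmin a' ha'0 b' hb').not_gt hlt

theorem stmt_3 (K : ℕ) (hK : 1 ≤ K) (h : ℕ → ℝ) (P σ : ℝ) (hP : 0 < P) (hσ : 0 < σ)
    (hpos : 0 < h 1) (hmono : ∀ k, 1 ≤ k → k < K → h k ≤ h (k + 1)) :
    -- for every `a ∈ 𝒮₀` and feasible `b` there is a strictly better pair with
    -- `0 ≤ a' ≤ 1/(h₁√P)`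
    (∀ a : ℝ, 1 / (h 1 * Real.sqrt P) < a → ∀ b : ℕ → ℝ, feasible K P b →
      ∃ a' : ℝ, 0 ≤ a' ∧ a' ≤ 1 / (h 1 * Real.sqrt P) ∧
        ∃ b' : ℕ → ℝ, feasible K P b' ∧ MSE K h σ a' b' < MSE K h σ a b) ∧
    -- consequently, any global minimizer over `a ≥ 0` and feasible `b` has
    -- `a* ≤ 1/(h₁√P)`, i.e. `a* ∉ 𝒮₀`
    (∀ astar : ℝ, ∀ bstar : ℕ → ℝ, 0 ≤ astar → feasible K P bstar →
      (∀ a : ℝ, 0 ≤ a → ∀ b : ℕ → ℝ, feasible K P b →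
        MSE K h σ astar bstar ≤ MSE K h σ a b) →
      astar ≤ 1 / (h 1 * Real.sqrt P)) :=
  stmt_3_general K h P σ hP hσ hpos hmono
end

section
/- (Switching structure.) Let 1 ≤ i ≤ K and suppose g_i ∈ 𝒮_i, i.e., 1/(h_{i+1}·√P) < g_i ≤ 1/(h_i·√P) if i < K, and 0 ≤ g_K ≤ 1/(h_K·√P) if i = K. Then: if i < K, g_{i+1} > 1/(h_{i+1}·√P); and g_{i−1} ≤ 1/(h_i·√P). -/
open Finset

/-! The proof rests on one observation: for `a > 0`, `1/(a√P) < gₙ` says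
`σ² + P ∑ₖ hₖ² < P a ∑ₖ hₖ` (sums over `k ≤ n`), and passing from `n` to `n + 1` with
`a = h_{n+1}` adds `P h_{n+1}²` to both sides. So the threshold `1/(h_{n+1}√P)` is crossed
by `gₙ` exactly when it is crossed by `g_{n+1}`; the two claims are the two directions. -/

lemma pos_of_pos_of_le_succ {K : ℕ} {h : ℕ → ℝ} (hpos : 0 < h 1)
    (hmono : ∀ k, 1 ≤ k → k < K → h k ≤ h (k + 1)) {k : ℕ} (hk : 1 ≤ k) (hkK : k ≤ K) :
    0 < h k := by
  induction k, hk using Nat.le_induction with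
  | base => exact hpos
  | succ k hk ih => exact (ih (by omega)).trans_le (hmono k hk (by omega))

section Threshold

variable (h : ℕ → ℝ) {P σ : ℝ} (hP : 0 < P) (hσ : 0 < σ)
include hP hσ

lemma one_div_lt_g_iff {a : ℝ} (ha : 0 < a) (n : ℕ) :
    1 / (a * Real.sqrt P) < g h P σ n ↔
      σ ^ 2 + P * ∑ k ∈ Icc 1 n, h k ^ 2 < P * a * ∑ k ∈ Icc 1 n, h k := by
  have hsqrt : 0 < Real.sqrt P := Real.sqrt_pos.2 hP
  have hden : 0 < σ ^ 2 + P * ∑ k ∈ Icc 1 n, h k ^ 2 := by positivity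
  rw [g, div_lt_div_iff₀ (by positivity) hden, one_mul]
  have hnum : Real.sqrt P * (∑ k ∈ Icc 1 n, h k) * (a * Real.sqrt P) =
      P * a * ∑ k ∈ Icc 1 n, h k := by
    linear_combination a * (∑ k ∈ Icc 1 n, h k) * Real.mul_self_sqrt hP.le
  rw [hnum]

lemma one_div_lt_g_succ {n : ℕ} (ha : 0 < h (n + 1))
    (hn : 1 / (h (n + 1) * Real.sqrt P) < g h P σ n) :
    1 / (h (n + 1) * Real.sqrt P) < g h P σ (n + 1) := by
  rw [one_div_lt_g_iff h hP hσ ha] at hn ⊢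
  rw [sum_Icc_succ_top (by omega), sum_Icc_succ_top (by omega)]
  linear_combination hn

lemma g_le_one_div_of_succ {n : ℕ} (ha : 0 < h (n + 1))
    (hn : g h P σ (n + 1) ≤ 1 / (h (n + 1) * Real.sqrt P)) :
    g h P σ n ≤ 1 / (h (n + 1) * Real.sqrt P) := by
  contrapose! hn
  exact one_div_lt_g_succ h hP hσ ha hn

end Threshold

theorem stmt_4_general (K : ℕ) (h : ℕ → ℝ) (P σ : ℝ) (hP : 0 < P) (hσ : 0 < σ)
    (hpos : 0 < h 1) (hmono : ∀ k, 1 ≤ k → k < K → h k ≤ h (k + 1))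
    (i : ℕ) (hi1 : 1 ≤ i) (hiK : i ≤ K)
    (hgi : memS K h P i (g h P σ i)) :
    (i < K → 1 / (h (i + 1) * Real.sqrt P) < g h P σ (i + 1)) ∧
    g h P σ (i - 1) ≤ 1 / (h i * Real.sqrt P) := by
  obtain ⟨n, rfl⟩ : ∃ n, i = n + 1 := ⟨i - 1, by omega⟩
  obtain ⟨hlower, hupper⟩ := hgi
  refine ⟨fun hlt => ?_, ?_⟩
  · rw [if_neg hlt.ne] at hlower
    exact one_div_lt_g_succ h hP hσ (pos_of_pos_of_le_succ hpos hmono (by omega) hlt) hlower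
  · rw [if_neg n.succ_ne_zero] at hupper
    exact g_le_one_div_of_succ h hP hσ (pos_of_pos_of_le_succ hpos hmono hi1 hiK) hupper

theorem stmt_4 (K : ℕ) (hK : 1 ≤ K) (h : ℕ → ℝ) (P σ : ℝ) (hP : 0 < P) (hσ : 0 < σ)
    (hpos : 0 < h 1) (hmono : ∀ k, 1 ≤ k → k < K → h k ≤ h (k + 1))
    (i : ℕ) (hi1 : 1 ≤ i) (hiK : i ≤ K)
    (hgi : memS K h P i (g h P σ i)) :
    (i < K → 1 / (h (i + 1) * Real.sqrt P) < g h P σ (i + 1)) ∧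
    g h P σ (i - 1) ≤ 1 / (h i * Real.sqrt P) :=
  stmt_4_general K h P σ hP hσ hpos hmono i hi1 hiK hgi
end

section
/- (Monotonicity.) (a) If 1 ≤ i ≤ K−1 and g_i ≤ 1/(h_{i+1}·√P), then g_i ≤ g_{i+1}. (b) If 1 ≤ i ≤ K and g_i > 1/(h_i·√P), then g_i ≤ g_{i−1}. -/
open Finset

theorem stmt_6 (K : ℕ) (hK : 1 ≤ K) (h : ℕ → ℝ) (P σ : ℝ) (hP : 0 < P) (hσ : 0 < σ)
    (hpos : 0 < h 1) (hmono : ∀ k, 1 ≤ k → k < K → h k ≤ h (k + 1)) :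
    -- (a)
    (∀ i, 1 ≤ i → i ≤ K - 1 → g h P σ i ≤ 1 / (h (i + 1) * Real.sqrt P) →
      g h P σ i ≤ g h P σ (i + 1)) ∧
    -- (b)
    (∀ i, 1 ≤ i → i ≤ K → 1 / (h i * Real.sqrt P) < g h P σ i →
      g h P σ i ≤ g h P σ (i - 1)) := by
  have hsP : 0 < Real.sqrt P := Real.sqrt_pos.mpr hP
  have hsq : Real.sqrt P * Real.sqrt P = P := Real.mul_self_sqrt hP.le
  have hposk : ∀ k, 1 ≤ k → k ≤ K → 0 < h k := by
    intro k h1 h2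
    induction k with
    | zero => omega
    | succ n ih =>
      rcases Nat.eq_or_lt_of_le h1 with h1' | h1'
      · simpa [← h1'] using hpos
      · exact lt_of_lt_of_le (ih (by omega) (by omega)) (hmono n (by omega) (by omega))
  have hden : ∀ i : ℕ, 0 < σ ^ 2 + P * ∑ k ∈ Finset.Icc 1 i, (h k) ^ 2 := by
    intro i
    have hB : (0:ℝ) ≤ ∑ k ∈ Finset.Icc 1 i, (h k) ^ 2 :=
      Finset.sum_nonneg fun _ _ => sq_nonneg _
    positivity
  constructor
  · intro i hi1 hiK hle
    have hiK' : i + 1 ≤ K := by omega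
    have hh : 0 < h (i + 1) := hposk _ (by omega) hiK'
    set A := ∑ k ∈ Finset.Icc 1 i, h k with hA
    set B := ∑ k ∈ Finset.Icc 1 i, (h k) ^ 2 with hB
    have hSA : ∑ k ∈ Finset.Icc 1 (i + 1), h k = A + h (i + 1) :=
      Finset.sum_Icc_succ_top (by omega) _
    have hSB : ∑ k ∈ Finset.Icc 1 (i + 1), (h k) ^ 2 = B + (h (i + 1)) ^ 2 :=
      Finset.sum_Icc_succ_top (by omega) _
    have hD1 : 0 < σ ^ 2 + P * B := hden i
    have hD2 : 0 < σ ^ 2 + P * (B + (h (i + 1)) ^ 2) := by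
      have := hden (i + 1); rwa [hSB] at this
    rw [g, g, hSA, hSB]
    rw [g] at hle
    rw [div_le_div_iff₀ hD1 (by positivity)] at hle
    rw [div_le_div_iff₀ hD1 hD2]
    have key : P * A * h (i + 1) ≤ σ ^ 2 + P * B := by nlinarith
    nlinarith [mul_pos hsP hh, mul_le_mul_of_nonneg_left key (mul_pos hsP hh).le]
  · intro i hi1 hiK hlt
    obtain ⟨j, rfl⟩ : ∃ j, i = j + 1 := ⟨i - 1, by omega⟩
    simp only [Nat.add_sub_cancel]
    have hh : 0 < h (j + 1) := hposk _ (by omega) hiK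
    set A := ∑ k ∈ Finset.Icc 1 j, h k with hA
    set B := ∑ k ∈ Finset.Icc 1 j, (h k) ^ 2 with hB
    have hSA : ∑ k ∈ Finset.Icc 1 (j + 1), h k = A + h (j + 1) :=
      Finset.sum_Icc_succ_top (by omega) _
    have hSB : ∑ k ∈ Finset.Icc 1 (j + 1), (h k) ^ 2 = B + (h (j + 1)) ^ 2 :=
      Finset.sum_Icc_succ_top (by omega) _
    have hD1 : 0 < σ ^ 2 + P * B := hden j
    have hD2 : 0 < σ ^ 2 + P * (B + (h (j + 1)) ^ 2) := by
      have := hden (j + 1); rwa [hSB] at this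
    rw [g, g, hSA, hSB]
    rw [g, hSA, hSB] at hlt
    rw [div_lt_div_iff₀ (by positivity) hD2] at hlt
    rw [div_le_div_iff₀ hD2 hD1]
    have key : σ ^ 2 + P * B ≤ P * h (j + 1) * A := by nlinarith
    nlinarith [mul_pos hsP hh, mul_le_mul_of_nonneg_left key (mul_pos hsP hh).le]
end

section
/- (Unimodality of {g_i}.) There exists an index i* ∈ {1,…,K} such that g_i ≤ g_{i+1} for all 1 ≤ i < i* and g_i ≥ g_{i+1} for all i* ≤ i < K; in particular g_{i*} = max_{1 ≤ i ≤ K} g_i. -/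
open Finset

theorem stmt_7 (K : ℕ) (hK : 1 ≤ K) (h : ℕ → ℝ) (P σ : ℝ) (hP : 0 < P) (hσ : 0 < σ)
    (hpos : 0 < h 1) (hmono : ∀ k, 1 ≤ k → k < K → h k ≤ h (k + 1)) :
    ∃ istar : ℕ, 1 ≤ istar ∧ istar ≤ K ∧
      (∀ i, 1 ≤ i → i < istar → g h P σ i ≤ g h P σ (i + 1)) ∧
      (∀ i, istar ≤ i → i < K → g h P σ (i + 1) ≤ g h P σ i) ∧
      (∀ i, 1 ≤ i → i ≤ K → g h P σ i ≤ g h P σ istar) := by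
  classical
  have hsqrt : 0 < Real.sqrt P := Real.sqrt_pos.mpr hP
  -- positivity of channel coefficients
  have hhpos : ∀ k, 1 ≤ k → k ≤ K → 0 < h k := by
    intro k hk1 hkK
    induction k with
    | zero => omega
    | succ n ih =>
      rcases Nat.lt_or_ge 1 (n + 1) with h1 | h1
      · have hn1 : 1 ≤ n := by omega
        exact lt_of_lt_of_le (ih hn1 (by omega)) (hmono n hn1 (by omega))
      · have : n + 1 = 1 := by omega
        rw [this]; exact hpos
  -- sums
  have hSpos : ∀ i, 1 ≤ i → i ≤ K → 0 < ∑ k ∈ Finset.Icc 1 i, h k := by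
    intro i hi1 hiK
    apply Finset.sum_pos
    · intro k hk
      simp only [Finset.mem_Icc] at hk
      exact hhpos k hk.1 (le_trans hk.2 hiK)
    · exact ⟨1, by simp [Finset.mem_Icc]; omega⟩
  have hden : ∀ i, 0 < σ ^ 2 + P * ∑ k ∈ Finset.Icc 1 i, (h k) ^ 2 := by
    intro i
    have h1 : 0 ≤ ∑ k ∈ Finset.Icc 1 i, (h k) ^ 2 :=
      Finset.sum_nonneg fun k _ => sq_nonneg _
    have h2 : 0 ≤ P * ∑ k ∈ Finset.Icc 1 i, (h k) ^ 2 := mul_nonneg hP.le h1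
    nlinarith [sq_nonneg σ]
  have hsum : ∀ i : ℕ, (∑ k ∈ Finset.Icc 1 (i + 1), h k)
      = (∑ k ∈ Finset.Icc 1 i, h k) + h (i + 1) := by
    intro i
    exact Finset.sum_Icc_succ_top (by omega) _
  have hsumq : ∀ i : ℕ, (∑ k ∈ Finset.Icc 1 (i + 1), (h k) ^ 2)
      = (∑ k ∈ Finset.Icc 1 i, (h k) ^ 2) + (h (i + 1)) ^ 2 := by
    intro i
    exact Finset.sum_Icc_succ_top (by omega) _
  -- key comparison lemmas
  have key₁ : ∀ i, 0 < h (i + 1) →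
      P * (∑ k ∈ Finset.Icc 1 i, h k) * h (i + 1)
        ≤ σ ^ 2 + P * ∑ k ∈ Finset.Icc 1 i, (h k) ^ 2 →
      g h P σ i ≤ g h P σ (i + 1) := by
    intro i hh hle
    unfold g
    rw [hsum i, hsumq i, div_le_div_iff₀ (hden i) (by rw [← hsumq i]; exact hden (i + 1))]
    nlinarith [hsqrt, hden i, mul_pos hsqrt hh]
  have key₂ : ∀ i, 0 < h (i + 1) →
      σ ^ 2 + P * ∑ k ∈ Finset.Icc 1 i, (h k) ^ 2
        ≤ P * (∑ k ∈ Finset.Icc 1 i, h k) * h (i + 1) →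
      g h P σ (i + 1) ≤ g h P σ i := by
    intro i hh hle
    unfold g
    rw [hsum i, hsumq i, div_le_div_iff₀ (by rw [← hsumq i]; exact hden (i + 1)) (hden i)]
    nlinarith [hsqrt, hden i, mul_pos hsqrt hh]
  -- the decrease condition
  set D : ℕ → Prop := fun i =>
    σ ^ 2 + P * ∑ k ∈ Finset.Icc 1 i, (h k) ^ 2
      < P * (∑ k ∈ Finset.Icc 1 i, h k) * h (i + 1) with hD
  -- D propagates
  have Dstep : ∀ i, 1 ≤ i → i + 1 < K → D i → D (i + 1) := by
    intro i hi1 hiK hDi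
    have hh1 : 0 < h (i + 1) := hhpos (i + 1) (by omega) (by omega)
    have hS1 : 0 < ∑ k ∈ Finset.Icc 1 (i + 1), h k := hSpos (i + 1) (by omega) (by omega)
    have hm : h (i + 1) ≤ h (i + 2) := hmono (i + 1) (by omega) (by omega)
    simp only [hD] at hDi ⊢
    rw [hsum i, hsumq i] at *
    have step1 : σ ^ 2 + P * ((∑ k ∈ Finset.Icc 1 i, (h k) ^ 2) + (h (i + 1)) ^ 2)
        < P * ((∑ k ∈ Finset.Icc 1 i, h k) + h (i + 1)) * h (i + 1) := by nlinarith
    calc σ ^ 2 + P * ((∑ k ∈ Finset.Icc 1 i, (h k) ^ 2) + (h (i + 1)) ^ 2)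
        < P * ((∑ k ∈ Finset.Icc 1 i, h k) + h (i + 1)) * h (i + 1) := step1
      _ ≤ P * ((∑ k ∈ Finset.Icc 1 i, h k) + h (i + 1)) * h (i + 1 + 1) := by
          apply mul_le_mul_of_nonneg_left hm
          positivity
  by_cases hEx : ∃ i, 1 ≤ i ∧ i < K ∧ D i
  · -- there is a first decrease; istar is that index
    have hEx' : ∃ i, 1 ≤ i ∧ i < K ∧ D i := hEx
    set m := Nat.find hEx' with hm
    obtain ⟨hm1, hmK, hmD⟩ := Nat.find_spec hEx'
    -- D holds for all i in [m, K)
    have Dall : ∀ i, m ≤ i → i < K → D i := by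
      intro i hmi hiK
      induction i with
      | zero => omega
      | succ n ih =>
        rcases Nat.lt_or_ge m (n + 1) with h1 | h1
        · exact Dstep n (by omega) (by omega) (ih (by omega) (by omega))
        · have : m = n + 1 := by omega
          rw [← this]; exact hmD
    -- increasing before m
    have incr : ∀ i, 1 ≤ i → i < m → g h P σ i ≤ g h P σ (i + 1) := by
      intro i hi1 him
      have hnD : ¬ D i := by
        intro hDi
        exact Nat.find_min hEx' him ⟨hi1, by omega, hDi⟩
      simp only [hD, not_lt] at hnD
      exact key₁ i (hhpos (i + 1) (by omega) (by omega)) hnD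
    -- decreasing after m
    have decr : ∀ i, m ≤ i → i < K → g h P σ (i + 1) ≤ g h P σ i := by
      intro i hmi hiK
      have hDi := Dall i hmi hiK
      simp only [hD] at hDi
      exact key₂ i (hhpos (i + 1) (by omega) (by omega)) hDi.le
    -- maximality
    have chainup : ∀ j, j ≤ m → ∀ i, 1 ≤ i → i ≤ j → g h P σ i ≤ g h P σ j := by
      intro j hjm
      induction j with
      | zero => intro i hi1 hij; omega
      | succ n ih =>
        intro i hi1 hij
        rcases Nat.lt_or_ge i (n + 1) with h1 | h1
        · exact le_trans (ih (by omega) i hi1 (by omega)) (incr n (by omega) (by omega))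
        · have : i = n + 1 := by omega
          rw [this]
    have chaindown : ∀ j, m ≤ j → j ≤ K → g h P σ j ≤ g h P σ m := by
      intro j hmj hjK
      induction j with
      | zero => omega
      | succ n ih =>
        rcases Nat.lt_or_ge m (n + 1) with h1 | h1
        · exact le_trans (decr n (by omega) (by omega)) (ih (by omega) (by omega))
        · have : m = n + 1 := by omega
          rw [this]
    refine ⟨m, hm1, by omega, incr, decr, ?_⟩
    intro i hi1 hiK
    rcases Nat.lt_or_ge i m with h1 | h1
    · exact chainup m le_rfl i hi1 (by omega)
    · exact chaindown i h1 hiK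
  · -- no decrease; istar = K
    push_neg at hEx
    have incr : ∀ i, 1 ≤ i → i < K → g h P σ i ≤ g h P σ (i + 1) := by
      intro i hi1 hiK
      have hnD : ¬ D i := fun hDi => absurd hDi (by
        intro hDi'
        exact absurd hDi' ((fun h2 => h2) (by
          have := hEx i hi1 hiK
          exact this)))
      simp only [hD, not_lt] at hnD
      exact key₁ i (hhpos (i + 1) (by omega) (by omega)) hnD
    have chainup : ∀ j, j ≤ K → ∀ i, 1 ≤ i → i ≤ j → g h P σ i ≤ g h P σ j := by
      intro j hjK
      induction j with
      | zero => intro i hi1 hij; omega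
      | succ n ih =>
        intro i hi1 hij
        rcases Nat.lt_or_ge i (n + 1) with h1 | h1
        · exact le_trans (ih (by omega) i hi1 (by omega)) (incr n (by omega) (by omega))
        · have : i = n + 1 := by omega
          rw [this]
    refine ⟨K, hK, le_rfl, fun i hi1 hiK => incr i hi1 hiK, fun i hKi hiK => by omega, ?_⟩
    intro i hi1 hiK
    exact chainup K le_rfl i hi1 hiK
end

section
/- (Optimal sum-of-MSE policy.) Define ã*_k = h_k·√P / (σ² + P·∑_{j=1}^K h_j²) and b̃*_k = √P for all k ∈ {1,…,K}. Then b̃* is feasible and for every ã ∈ ℝ^K and every feasible b̃, ∑_{k=1}^K MSE_k(ã*, b̃*) ≤ ∑_{k=1}^K MSE_k(ã, b̃). -/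
open Finset

/-- The estimation MSE of sensor `k` in the MAC system:
`MSE_k(ã, b̃) = (ã_k h_k b̃_k - 1)² + ã_k² ∑_{j≠k} (h_j b̃_j)² + ã_k² σ²`. -/
noncomputable def msek (K : ℕ) (h : ℕ → ℝ) (σ : ℝ) (a b : ℕ → ℝ) (k : ℕ) : ℝ :=
  (a k * h k * b k - 1) ^ 2 +
    (a k) ^ 2 * (∑ j ∈ (Finset.Icc 1 K).erase k, (h j * b j) ^ 2) +
    (a k) ^ 2 * σ ^ 2

/-!
For fixed `b̃`, write `d_k = h_k b̃_k` and `R = ∑ d_j²`. Then `MSE_k` is the scalar quadratic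
`(ã_k d_k - 1)² + ã_k² (R - d_k² + σ²)` in `ã_k`, whose minimum `1 - d_k² / (R + σ²)` is attained at
the LMMSE coefficient `ã_k = d_k / (R + σ²)`. Summing over `k`, the best sum-MSE for a given `b̃` is
`K - R / (R + σ²)`, which decreases in `R`; feasibility bounds `R` by `P ∑ h_j²`, the value of `R`
at `b̃*`, and `ã*` is the LMMSE coefficient for `b̃*`.
-/

theorem one_sub_div_le_sq_mul_sub_one_add (a d c : ℝ) (hc : 0 < c) :
    1 - d ^ 2 / (d ^ 2 + c) ≤ (a * d - 1) ^ 2 + a ^ 2 * c := by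
  have hdc : 0 < d ^ 2 + c := by positivity
  rw [one_sub_div hdc.ne', add_sub_cancel_left, div_le_iff₀ hdc]
  nlinarith [sq_nonneg ((d ^ 2 + c) * a - d)]

theorem sq_mul_sub_one_add_eq_one_sub_div (d c : ℝ) (hc : 0 < c) :
    (d / (d ^ 2 + c) * d - 1) ^ 2 + (d / (d ^ 2 + c)) ^ 2 * c = 1 - d ^ 2 / (d ^ 2 + c) := by
  have hdc : d ^ 2 + c ≠ 0 := by positivity
  field_simp
  ring

theorem div_add_le_div_add {x y c : ℝ} (hx : 0 ≤ x) (hxy : x ≤ y) (hc : 0 < c) :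
    x / (x + c) ≤ y / (y + c) := by
  rw [div_le_div_iff₀ (by positivity) (by linarith)]
  nlinarith

noncomputable def rxPower (K : ℕ) (h b : ℕ → ℝ) : ℝ :=
  ∑ j ∈ Icc 1 K, (h j * b j) ^ 2

section MSE

variable {K : ℕ} {h : ℕ → ℝ} {σ : ℝ} {a b : ℕ → ℝ} {k : ℕ}

theorem msek_eq (hk : k ∈ Icc 1 K) :
    msek K h σ a b k =
      (a k * (h k * b k) - 1) ^ 2 + a k ^ 2 * (rxPower K h b - (h k * b k) ^ 2 + σ ^ 2) := by
  rw [msek, rxPower, ← sum_erase_add _ _ hk]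
  ring

theorem interference_add_noise_pos (hσ : 0 < σ) (hk : k ∈ Icc 1 K) :
    0 < rxPower K h b - (h k * b k) ^ 2 + σ ^ 2 := by
  have hrest : 0 ≤ rxPower K h b - (h k * b k) ^ 2 := by
    rw [rxPower, ← sum_erase_add _ _ hk, add_sub_cancel_right]
    exact sum_nonneg fun j _ => sq_nonneg _
  positivity

theorem one_sub_div_le_msek (hσ : 0 < σ) (hk : k ∈ Icc 1 K) :
    1 - (h k * b k) ^ 2 / (rxPower K h b + σ ^ 2) ≤ msek K h σ a b k := by
  have key := one_sub_div_le_sq_mul_sub_one_add (a k) (h k * b k)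
    (rxPower K h b - (h k * b k) ^ 2 + σ ^ 2) (interference_add_noise_pos hσ hk)
  rw [msek_eq hk]
  convert key using 3
  ring

theorem msek_eq_one_sub_div (hσ : 0 < σ) (hk : k ∈ Icc 1 K)
    (ha : a k = h k * b k / (rxPower K h b + σ ^ 2)) :
    msek K h σ a b k = 1 - (h k * b k) ^ 2 / (rxPower K h b + σ ^ 2) := by
  have key := sq_mul_sub_one_add_eq_one_sub_div (h k * b k)
    (rxPower K h b - (h k * b k) ^ 2 + σ ^ 2) (interference_add_noise_pos hσ hk)
  have hden : (h k * b k) ^ 2 + (rxPower K h b - (h k * b k) ^ 2 + σ ^ 2) =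
      rxPower K h b + σ ^ 2 := by ring
  rw [hden] at key
  rw [msek_eq hk, ha, key]

theorem sum_one_sub_div_eq (K : ℕ) (h b : ℕ → ℝ) (σ : ℝ) :
    ∑ k ∈ Icc 1 K, (1 - (h k * b k) ^ 2 / (rxPower K h b + σ ^ 2)) =
      K - rxPower K h b / (rxPower K h b + σ ^ 2) := by
  rw [sum_sub_distrib, ← sum_div, ← rxPower]
  simp

theorem card_sub_div_le_sum_msek (hσ : 0 < σ) :
    K - rxPower K h b / (rxPower K h b + σ ^ 2) ≤ ∑ k ∈ Icc 1 K, msek K h σ a b k := by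
  rw [← sum_one_sub_div_eq]
  exact sum_le_sum fun k hk => one_sub_div_le_msek hσ hk

theorem sum_msek_eq (hσ : 0 < σ)
    (ha : ∀ k, a k = h k * b k / (rxPower K h b + σ ^ 2)) :
    ∑ k ∈ Icc 1 K, msek K h σ a b k = K - rxPower K h b / (rxPower K h b + σ ^ 2) := by
  rw [← sum_one_sub_div_eq]
  exact sum_congr rfl fun k hk => msek_eq_one_sub_div hσ hk (ha k)

end MSE

theorem rxPower_const_sqrt {P : ℝ} (hP : 0 ≤ P) (K : ℕ) (h : ℕ → ℝ) :
    rxPower K h (fun _ => Real.sqrt P) = P * ∑ j ∈ Icc 1 K, h j ^ 2 := by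
  rw [rxPower, mul_sum]
  refine sum_congr rfl fun j _ => ?_
  rw [mul_pow, Real.sq_sqrt hP, mul_comm]

theorem rxPower_le_of_feasible {K : ℕ} {P : ℝ} {h b : ℕ → ℝ} (hP : 0 ≤ P)
    (hb : feasible K P b) :
    rxPower K h b ≤ P * ∑ j ∈ Icc 1 K, h j ^ 2 := by
  rw [rxPower, mul_sum]
  refine sum_le_sum fun j hj => ?_
  obtain ⟨hj1, hjK⟩ := mem_Icc.mp hj
  obtain ⟨hb0, hbP⟩ := hb j hj1 hjK
  have hbsq : b j ^ 2 ≤ P := (Real.le_sqrt hb0 hP).mp hbP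
  rw [mul_pow, mul_comm]
  exact mul_le_mul_of_nonneg_right hbsq (sq_nonneg _)

theorem stmt_10_general (K : ℕ) (h : ℕ → ℝ) (P σ : ℝ) (hP : 0 < P) (hσ : 0 < σ)
    (astar bstar : ℕ → ℝ)
    (hastar : ∀ k, astar k =
      h k * Real.sqrt P / (σ ^ 2 + P * ∑ j ∈ Finset.Icc 1 K, (h j) ^ 2))
    (hbstar : ∀ k, bstar k = Real.sqrt P) :
    feasible K P bstar ∧
    ∀ a b : ℕ → ℝ, feasible K P b →
      ∑ k ∈ Finset.Icc 1 K, msek K h σ astar bstar k ≤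
        ∑ k ∈ Finset.Icc 1 K, msek K h σ a b k := by
  obtain rfl : bstar = fun _ => Real.sqrt P := funext hbstar
  have hR := rxPower_const_sqrt hP.le K h
  refine ⟨fun k _ _ => ⟨Real.sqrt_nonneg P, le_rfl⟩, fun a b hb => ?_⟩
  rw [sum_msek_eq hσ fun k => by rw [hastar, hR, add_comm], hR]
  calc (K : ℝ) - (P * ∑ j ∈ Icc 1 K, h j ^ 2) / (P * ∑ j ∈ Icc 1 K, h j ^ 2 + σ ^ 2)
      ≤ K - rxPower K h b / (rxPower K h b + σ ^ 2) :=
        sub_le_sub_left (div_add_le_div_add (sum_nonneg fun _ _ => sq_nonneg _)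
          (rxPower_le_of_feasible hP.le hb) (by positivity)) _
    _ ≤ _ := card_sub_div_le_sum_msek hσ

theorem stmt_10 (K : ℕ) (hK : 1 ≤ K) (h : ℕ → ℝ) (P σ : ℝ) (hP : 0 < P) (hσ : 0 < σ)
    (hpos : ∀ k, 1 ≤ k → k ≤ K → 0 < h k)
    (astar bstar : ℕ → ℝ)
    (hastar : ∀ k, astar k =
      h k * Real.sqrt P / (σ ^ 2 + P * ∑ j ∈ Finset.Icc 1 K, (h j) ^ 2))
    (hbstar : ∀ k, bstar k = Real.sqrt P) :
    feasible K P bstar ∧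
    ∀ a b : ℕ → ℝ, feasible K P b →
      ∑ k ∈ Finset.Icc 1 K, msek K h σ astar bstar k ≤
        ∑ k ∈ Finset.Icc 1 K, msek K h σ a b k :=
  stmt_10_general K h P σ hP hσ astar bstar hastar hbstar
end

section
/- (Achievable MSE region.) For every feasible b̃, define m_k = 1 − (h_k·b̃_k)² / (σ² + ∑_{j=1}^K (h_j·b̃_j)²) for each k ∈ {1,…,K} (the minimum estimation MSE of sensor k given b̃). Then for every k: m_k ≤ 1, and m_k + (P·h_k²/σ²)·(∑_{j=1}^K m_j − (K−1)) ≥ 1. -/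
open Finset

theorem stmt_11 (K : ℕ) (hK : 1 ≤ K) (h : ℕ → ℝ) (P σ : ℝ) (hP : 0 < P) (hσ : 0 < σ)
    (hpos : ∀ k, 1 ≤ k → k ≤ K → 0 < h k)
    (b : ℕ → ℝ) (hb : feasible K P b)
    -- `m_k` is the minimum estimation MSE of sensor `k` given `b̃`
    (m : ℕ → ℝ)
    (hm : ∀ k, m k =
      1 - (h k * b k) ^ 2 / (σ ^ 2 + ∑ j ∈ Finset.Icc 1 K, (h j * b j) ^ 2)) :
    ∀ k, 1 ≤ k → k ≤ K →
      m k ≤ 1 ∧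
      1 ≤ m k + (P * (h k) ^ 2 / σ ^ 2) *
        ((∑ j ∈ Finset.Icc 1 K, m j) - ((K : ℝ) - 1)) := by
  intro k hk1 hkK
  set T : ℝ := ∑ j ∈ Finset.Icc 1 K, (h j * b j) ^ 2 with hT
  have hT0 : 0 ≤ T := Finset.sum_nonneg fun j _ => sq_nonneg _
  have hS : 0 < σ ^ 2 + T := by positivity
  have hsum : (∑ j ∈ Finset.Icc 1 K, m j) - ((K : ℝ) - 1) = σ ^ 2 / (σ ^ 2 + T) := by
    have : ∑ j ∈ Finset.Icc 1 K, m j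
        = (K : ℝ) - T / (σ ^ 2 + T) := by
      have hcard : (Finset.Icc 1 K).card = K := by simp
      calc ∑ j ∈ Finset.Icc 1 K, m j
          = ∑ j ∈ Finset.Icc 1 K, (1 - (h j * b j) ^ 2 / (σ ^ 2 + T)) := by
            exact Finset.sum_congr rfl fun j _ => hm j
        _ = (K : ℝ) - T / (σ ^ 2 + T) := by
            rw [Finset.sum_sub_distrib, ← Finset.sum_div]
            simp [hcard, hT]
    rw [this]
    field_simp
    ring
  constructor
  · rw [hm k]
    have : 0 ≤ (h k * b k) ^ 2 / (σ ^ 2 + T) := by positivity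
    linarith
  · rw [hm k, hsum]
    have hbk : (b k) ^ 2 ≤ P := by
      obtain ⟨hb0, hbP⟩ := hb k hk1 hkK
      have := Real.sq_sqrt hP.le
      nlinarith [Real.sqrt_nonneg P]
    have hhk := hpos k hk1 hkK
    have key : (h k * b k) ^ 2 / (σ ^ 2 + T) ≤ P * (h k) ^ 2 / (σ ^ 2 + T) := by
      gcongr
      nlinarith [sq_nonneg (h k)]
    have : P * h k ^ 2 / σ ^ 2 * (σ ^ 2 / (σ ^ 2 + T)) = P * h k ^ 2 / (σ ^ 2 + T) := by
      field_simp
    linarith [key, this]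
end

section
/- For every integer K ≥ 2, the function x ↦ ∑_{k=2}^K x_(1)/x_(k) is μ^K-integrable and ∫_{ℝ^K} (∑_{k=2}^K x_(1)/x_(k)) dμ^K(x) = (K·ln K − (K−1))/(K−1). Consequently, for any P > 0, the average power consumption of the channel-inversion policy, (P/K)·(1 + E[∑_{k=2}^K X_(1)/X_(k)]), equals P·ln K/(K−1). -/
open MeasureTheory ProbabilityTheory Finset

/-- The `K`-fold product of the standard exponential distribution, modeling `K` i.i.d.
standard exponential channel power gains. -/
noncomputable def muK (K : ℕ) : Measure (Fin K → ℝ) :=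
  Measure.pi fun _ => ProbabilityTheory.expMeasure 1

/-- The `i`-th order statistic (0-based) of the coordinates of `x : Fin K → ℝ`:
the coordinates sorted in increasing order (so `orderStat x ⟨0, _⟩ = x_(1)`). -/
noncomputable def orderStat {K : ℕ} (x : Fin K → ℝ) (i : Fin K) : ℝ :=
  x (Tuple.sort x i)

section StmtAux
open Real Set

instance : IsProbabilityMeasure (expMeasure 1) := isProbabilityMeasure_expMeasure one_pos

instance muK_prob (K : ℕ) : IsProbabilityMeasure (muK K) := by unfold muK; infer_instance

lemma expe_Iic : expMeasure 1 (Set.Iic 0) = 0 := by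
  have h1 : expMeasure 1 (Set.Iio 0) = 0 := by
    rw [show (expMeasure 1 : Measure ℝ) = gammaMeasure 1 1 from rfl, gammaMeasure, withDensity_apply _ measurableSet_Iio]
    exact lintegral_exponentialPDF_of_nonpos le_rfl
  have h0 : expMeasure 1 {(0:ℝ)} = 0 := by
    rw [show (expMeasure 1 : Measure ℝ) = gammaMeasure 1 1 from rfl, gammaMeasure]
    exact (withDensity_absolutelyContinuous _ _) (measure_singleton 0)
  have : Set.Iic (0:ℝ) = Set.Iio 0 ∪ {0} := by ext y; simp [le_iff_lt_or_eq]
  rw [this]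
  exact le_antisymm ((measure_union_le _ _).trans (by simp [h1, h0])) bot_le

lemma expe_Ioi {c : ℝ} (hc : 0 ≤ c) : expMeasure 1 (Set.Ioi c) = ENNReal.ofReal (Real.exp (-c)) := by
  rw [show (expMeasure 1 : Measure ℝ) = gammaMeasure 1 1 from rfl, gammaMeasure, withDensity_apply _ measurableSet_Ioi]
  have hpdf : (gammaPDF 1 1) = exponentialPDF 1 := rfl
  rw [hpdf]
  have : ∀ x ∈ Set.Ioi c, exponentialPDF 1 x = ENNReal.ofReal (Real.exp (-x)) := by
    intro x hx
    rw [exponentialPDF_of_nonneg (hc.trans (le_of_lt hx))]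
    norm_num
  rw [setLIntegral_congr_fun measurableSet_Ioi this]
  rw [← ofReal_integral_eq_lintegral_ofReal]
  · rw [integral_exp_neg_Ioi]
  · exact (by simpa using exp_neg_integrableOn_Ioi c one_pos : IntegrableOn (fun x => rexp (-x)) (Set.Ioi c))
  · exact Filter.Eventually.of_forall fun x => (exp_pos _).le

lemma lint_exp_Ioi {a : ℝ} (ha : 0 < a) :
    ∫⁻ s in Set.Ioi (0:ℝ), ENNReal.ofReal (exp (-(a*s))) = ENNReal.ofReal (1/a) := by
  rw [← ofReal_integral_eq_lintegral_ofReal]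
  · congr 1
    have := integral_comp_mul_left_Ioi (fun u => exp (-u)) 0 ha
    simp only [mul_zero] at this
    rw [this, integral_exp_neg_Ioi]
    simp [smul_eq_mul, one_div]
  · have := exp_neg_integrableOn_Ioi 0 ha; simp only [neg_mul] at this; exact this
  · exact Filter.Eventually.of_forall fun x => (exp_pos _).le

lemma lint_exp_mue {b : ℝ} (hb : 0 ≤ b) :
    ∫⁻ s, ENNReal.ofReal (exp (-(b*s))) ∂(expMeasure 1) = ENNReal.ofReal (1/(b+1)) := by
  have hm : Measurable (exponentialPDF 1) :=
    (measurable_exponentialPDFReal 1).ennreal_ofReal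
  have hg : Measurable fun s : ℝ => ENNReal.ofReal (exp (-(b*s))) := by
    exact (measurable_const.mul measurable_id).neg.exp.ennreal_ofReal
  rw [show (expMeasure 1 : Measure ℝ) = volume.withDensity (exponentialPDF 1) from rfl,
    lintegral_withDensity_eq_lintegral_mul _ hm hg]
  have hae : (fun s => (exponentialPDF 1 * fun s => ENNReal.ofReal (exp (-(b*s)))) s)
      =ᵐ[volume] (Set.Ioi (0:ℝ)).indicator (fun s => ENNReal.ofReal (exp (-((b+1)*s)))) := by
    filter_upwards [compl_mem_ae_iff.mpr (show volume ({(0:ℝ)} : Set ℝ) = 0 from measure_singleton 0)] with s hs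
    simp only [Set.mem_compl_iff, Set.mem_singleton_iff] at hs
    rcases lt_trichotomy s 0 with h | h | h
    · simp [Set.indicator_of_notMem (by simpa using not_lt.mpr h.le : s ∉ Set.Ioi (0:ℝ)),
        exponentialPDF_of_neg h]
    · exact absurd h hs
    · rw [Set.indicator_of_mem (by simpa using h)]
      simp only [Pi.mul_apply]
      rw [exponentialPDF_of_nonneg h.le]
      rw [← ENNReal.ofReal_mul (by positivity)]
      rw [one_mul, ← Real.exp_add]
      ring_nf
  rw [lintegral_congr_ae hae, lintegral_indicator measurableSet_Ioi,
    lint_exp_Ioi (by linarith)]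

lemma muK_pos_ae (n : ℕ) : ∀ᵐ x ∂(muK n), ∀ j, 0 < x j := by
  rw [MeasureTheory.ae_all_iff]
  intro j
  rw [Filter.eventually_iff, mem_ae_iff]
  have : {x : Fin n → ℝ | 0 < x j}ᶜ = (Function.eval j) ⁻¹' (Set.Iic 0) := by
    ext x; simp [not_lt]
  rw [this]
  exact Measure.pi_eval_preimage_null _ expe_Iic

variable {n : ℕ}

noncomputable def mmin (x : Fin (n+1) → ℝ) : ℝ :=
  Finset.univ.inf' ⟨0, mem_univ 0⟩ x

lemma mmin_le (x : Fin (n+1) → ℝ) (j : Fin (n+1)) : mmin x ≤ x j :=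
  Finset.inf'_le _ (mem_univ j)

lemma exists_mmin (x : Fin (n+1) → ℝ) : ∃ j, mmin x = x j := by
  obtain ⟨j, -, hj⟩ := Finset.exists_mem_eq_inf' (⟨0, mem_univ 0⟩ : (Finset.univ : Finset (Fin (n+1))).Nonempty) x
  exact ⟨j, hj⟩

lemma measurable_mmin : Measurable (fun x : Fin (n+1) → ℝ => mmin x) := by
  have : Measurable (Finset.univ.inf' (⟨0, mem_univ 0⟩ :
      (Finset.univ : Finset (Fin (n+1))).Nonempty)
      (fun j => (fun x : Fin (n+1) → ℝ => x j))) :=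
    Finset.inf'_induction _ _ (fun _f hf _g hg => hf.inf hg)
      (fun j _ => measurable_pi_apply j)
  convert this using 1
  ext x
  exact (Finset.inf'_apply (C := fun _ => ℝ) (⟨0, mem_univ 0⟩ : (Finset.univ : Finset (Fin (n+1))).Nonempty) (fun j (y : Fin (n+1) → ℝ) => y j) x).symm

lemma orderStat_zero (x : Fin (n+1) → ℝ) {h : 0 < n + 1} :
    orderStat x ⟨0, h⟩ = mmin x := by
  apply le_antisymm
  · obtain ⟨j, hj⟩ := exists_mmin x
    have : x j = orderStat x ((Tuple.sort x).symm j) := by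
      simp [orderStat]
    rw [hj, this]
    exact Tuple.monotone_sort x (Fin.zero_le _)
  · exact mmin_le x _

lemma sum_orderStat (x : Fin (n+1) → ℝ) (c : ℝ) :
    ∑ k, c / orderStat x k = ∑ j, c / x j :=
  Equiv.sum_comp (Tuple.sort x) (fun j => c / x j)

variable {n : ℕ}

def ASet (n : ℕ) (t : ℝ) : Set (ℝ × (Fin n → ℝ)) :=
  {p | 0 < p.1 ∧ ∀ j, t * p.1 < p.2 j}

lemma measurableSet_ASet (t : ℝ) : MeasurableSet (ASet n t) := by
  have : ASet n t = {p : ℝ × (Fin n → ℝ) | 0 < p.1} ∩ ⋂ j, {p | t * p.1 < p.2 j} := by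
    ext p; simp [ASet]
  rw [this]
  exact (measurableSet_lt measurable_const measurable_fst).inter
    (MeasurableSet.iInter fun j =>
      measurableSet_lt (measurable_fst.const_mul t)
        ((measurable_pi_apply j).comp measurable_snd))

lemma measA {t : ℝ} (ht : 0 < t) :
    ((expMeasure 1).prod (muK n)) (ASet n t) = ENNReal.ofReal (1/(n*t+1)) := by
  rw [Measure.prod_apply (measurableSet_ASet t)]
  have key : ∀ s : ℝ, (muK n) (Prod.mk s ⁻¹' (ASet n t)) =
      (Set.Ioi (0:ℝ)).indicator (fun s => ENNReal.ofReal (exp (-((n*t)*s)))) s := by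
    intro s
    rcases le_or_gt s 0 with hs | hs
    · have : Prod.mk s ⁻¹' (ASet n t) = ∅ := by
        ext y; simp [ASet, not_lt.mpr hs]
      rw [this, Set.indicator_of_notMem (by simpa using hs)]
      simp
    · have h1 : Prod.mk s ⁻¹' (ASet n t) = Set.pi Set.univ (fun _ : Fin n => Set.Ioi (t*s)) := by
        ext y
        simp [ASet, hs, Set.mem_pi]
      rw [h1, Set.indicator_of_mem (by simpa using hs), muK, Measure.pi_pi]
      have hts : 0 ≤ t * s := by positivity
      rw [Finset.prod_const, expe_Ioi hts, Finset.card_univ, Fintype.card_fin,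
        ← ENNReal.ofReal_pow (exp_pos _).le, ← Real.exp_nat_mul]
      ring_nf
  rw [lintegral_congr_ae (Filter.Eventually.of_forall key)]
  rw [lintegral_indicator measurableSet_Ioi]
  have : ∫⁻ s in Set.Ioi 0, ENNReal.ofReal (exp (-((n*t)*s))) ∂(expMeasure 1)
      = ∫⁻ s, ENNReal.ofReal (exp (-((n*t)*s))) ∂(expMeasure 1) := by
    rw [← lintegral_indicator measurableSet_Ioi]
    apply lintegral_congr_ae
    filter_upwards [compl_mem_ae_iff.mpr expe_Iic] with s hs
    rw [Set.indicator_of_mem]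
    simpa [not_le] using hs
  rw [this, lint_exp_mue (by positivity)]


noncomputable def hfun (i : Fin (n+1)) (x : Fin (n+1) → ℝ) : ℝ := mmin x / x i

lemma measurable_hfun (i : Fin (n+1)) : Measurable (hfun i) :=
  measurable_mmin.div (measurable_pi_apply i)

lemma hfun_bounds (i : Fin (n+1)) :
    ∀ᵐ x ∂(muK (n+1)), 0 ≤ hfun i x ∧ hfun i x ≤ 1 := by
  filter_upwards [muK_pos_ae (n+1)] with x hx
  have hxi := hx i
  have hm : 0 < mmin x := by obtain ⟨j, hj⟩ := exists_mmin x; rw [hj]; exact hx j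
  exact ⟨div_nonneg hm.le hxi.le, (div_le_one hxi).mpr (mmin_le x i)⟩

lemma integrable_hfun (i : Fin (n+1)) : Integrable (hfun i) (muK (n+1)) := by
  refine Integrable.mono' (integrable_const 1) (measurable_hfun i).aestronglyMeasurable ?_
  filter_upwards [hfun_bounds i] with x hx
  rw [Real.norm_eq_abs, abs_le]
  exact ⟨by linarith [hx.1], hx.2⟩

lemma meas_lt_Ioo {i : Fin (n+1)} {t : ℝ} (ht0 : 0 < t) (ht1 : t < 1) :
    muK (n+1) {x | t < hfun i x} = ENNReal.ofReal (1/(n*t+1)) := by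
  set e := MeasurableEquiv.piFinSuccAbove (fun _ : Fin (n+1) => ℝ) i with he
  have hmp : MeasurePreserving e (muK (n+1)) ((expMeasure 1).prod (muK n)) :=
    measurePreserving_piFinSuccAbove (fun _ => expMeasure 1) i
  have hae : {x | t < hfun i x} =ᵐ[muK (n+1)] e ⁻¹' (ASet n t) := by
    rw [Filter.eventuallyEq_set]
    filter_upwards [muK_pos_ae (n+1)] with x hx
    have hxi := hx i
    have hfst : (e x).1 = x i := rfl
    have hsnd : ∀ j : Fin n, (e x).2 j = x (i.succAbove j) := fun j => rfl
    simp only [Set.mem_setOf_eq, Set.mem_preimage, ASet]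
    constructor
    · intro h
      have hm : t * x i < mmin x := (lt_div_iff₀ hxi).mp h
      refine ⟨by rw [hfst]; exact hxi, fun j => ?_⟩
      rw [hfst, hsnd]
      exact hm.trans_le (mmin_le x _)
    · rintro ⟨-, hall⟩
      show t < mmin x / x i
      rw [lt_div_iff₀ hxi]
      obtain ⟨j₀, hj₀⟩ := exists_mmin x
      rw [hj₀]
      rcases eq_or_ne j₀ i with rfl | hne
      · nlinarith
      · obtain ⟨k, hk⟩ := Fin.exists_succAbove_eq hne
        have h2 := hall k
        rw [hfst, hsnd, hk] at h2
        exact h2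
  rw [measure_congr hae, hmp.measure_preimage (measurableSet_ASet t).nullMeasurableSet,
    measA ht0]

lemma meas_lt_Ici {i : Fin (n+1)} {t : ℝ} (ht : 1 ≤ t) :
    muK (n+1) {x | t < hfun i x} = 0 := by
  have : ∀ᵐ x ∂(muK (n+1)), x ∉ {x | t < hfun i x} := by
    filter_upwards [hfun_bounds i] with x hx
    simp only [Set.mem_setOf_eq, not_lt]
    linarith [hx.2]
  exact measure_eq_zero_iff_ae_notMem.mpr this

-- the elementary interval integral
lemma integral_one_div_linear {n : ℕ} (hn : 0 < n) :
    ∫ t in Set.Ioo (0:ℝ) 1, 1/((n:ℝ)*t+1) = Real.log (n+1) / n := by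
  have hnR : (0:ℝ) < n := by exact_mod_cast hn
  have hpos : ∀ t : ℝ, t ∈ uIcc (0:ℝ) 1 → 0 < (n:ℝ)*t+1 := by
    intro t ht
    rw [Set.uIcc_of_le zero_le_one] at ht
    nlinarith [ht.1]
  have hcont : ContinuousOn (fun t : ℝ => 1/((n:ℝ)*t+1)) (uIcc (0:ℝ) 1) := by
    apply ContinuousOn.div continuousOn_const
    · fun_prop
    · intro t ht; exact (hpos t ht).ne'
  have hderiv : ∀ t ∈ uIcc (0:ℝ) 1,
      HasDerivAt (fun t : ℝ => Real.log ((n:ℝ)*t+1) / n) (1/((n:ℝ)*t+1)) t := by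
    intro t ht
    have h1 : HasDerivAt (fun t : ℝ => (n:ℝ)*t+1) n t := by
      simpa using ((hasDerivAt_id t).const_mul (n:ℝ)).add_const 1
    have h2 := (Real.hasDerivAt_log (hpos t ht).ne').comp t h1
    have h3 := h2.div_const (n:ℝ)
    rw [show (1/((n:ℝ)*t+1)) = ((n:ℝ)*t+1)⁻¹ * n / n by rw [mul_div_assoc, div_self hnR.ne', mul_one, one_div]]
    exact h3
  have hFTC := intervalIntegral.integral_eq_sub_of_hasDerivAt hderiv
    (hcont.intervalIntegrable)
  rw [← MeasureTheory.integral_Ioc_eq_integral_Ioo,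
      ← intervalIntegral.integral_of_le zero_le_one, hFTC]
  simp

lemma integral_hfun (hn : 0 < n) (i : Fin (n+1)) :
    ∫ x, hfun i x ∂(muK (n+1)) = Real.log (n+1) / n := by
  have h0 : 0 ≤ᵐ[muK (n+1)] hfun i := by
    filter_upwards [hfun_bounds i] with x hx using hx.1
  rw [(integrable_hfun i).integral_eq_integral_meas_lt h0]
  set F : ℝ → ℝ := fun t => (muK (n+1) {x | t < hfun i x}).toReal with hF
  change ∫ t in Set.Ioi (0:ℝ), F t = _
  have hsplit : Set.Ioo (0:ℝ) 1 ∪ Set.Ici 1 = Set.Ioi (0:ℝ) := Ioo_union_Ici_eq_Ioi zero_lt_one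
  have hIoo : ∀ t ∈ Set.Ioo (0:ℝ) 1, F t = 1/((n:ℝ)*t+1) := by
    intro t ht
    rw [hF]
    simp only
    rw [meas_lt_Ioo ht.1 ht.2, ENNReal.toReal_ofReal]
    have h1 : (0:ℝ) ≤ (n:ℝ) * t := mul_nonneg (Nat.cast_nonneg n) ht.1.le
    have h2 : (0:ℝ) < (n:ℝ)*t+1 := by linarith
    positivity
  have hIci : ∀ t ∈ Set.Ici (1:ℝ), F t = 0 := by
    intro t ht
    rw [hF]; simp only
    rw [meas_lt_Ici ht]; simp
  have hint1 : IntegrableOn (fun t : ℝ => 1/((n:ℝ)*t+1)) (Set.Ioo 0 1) := by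
    apply (ContinuousOn.integrableOn_Icc ?_).mono_set Ioo_subset_Icc_self
    apply ContinuousOn.div continuousOn_const
    · fun_prop
    · intro t ht
      have : (0:ℝ) ≤ t := ht.1
      have : (0:ℝ) ≤ (n:ℝ) * t := by positivity
      nlinarith
  have hFint1 : IntegrableOn F (Set.Ioo 0 1) := by
    exact (integrableOn_congr_fun hIoo measurableSet_Ioo).mpr hint1
  have hFint2 : IntegrableOn F (Set.Ici 1) := by
    exact (integrableOn_congr_fun hIci measurableSet_Ici).mpr (integrableOn_zero)
  rw [← hsplit, setIntegral_union (by rw [Set.disjoint_right]; intro a ha; simp only [Set.mem_Ioo, not_and, not_lt]; intro _; exact ha) measurableSet_Ici hFint1 hFint2]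
  rw [setIntegral_congr_fun measurableSet_Ioo hIoo, setIntegral_congr_fun measurableSet_Ici hIci]
  rw [integral_one_div_linear hn]
  simp

end StmtAux

theorem stmt_13 (K : ℕ) (hK : 2 ≤ K) :
    -- `x ↦ ∑_{k=2}^K x_(1)/x_(k)` is integrable
    Integrable (fun x : Fin K → ℝ =>
      ∑ k ∈ Finset.univ.erase (⟨0, by omega⟩ : Fin K),
        orderStat x ⟨0, by omega⟩ / orderStat x k) (muK K) ∧
    -- its expectation equals `(K ln K - (K-1))/(K-1)`
    (∫ x : Fin K → ℝ,
        (∑ k ∈ Finset.univ.erase (⟨0, by omega⟩ : Fin K),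
          orderStat x ⟨0, by omega⟩ / orderStat x k) ∂(muK K)) =
      ((K : ℝ) * Real.log K - ((K : ℝ) - 1)) / ((K : ℝ) - 1) ∧
    -- consequently the average power consumption of the channel-inversion policy,
    -- `(P/K)(1 + E[∑_{k=2}^K X_(1)/X_(k)])`, equals `P ln K/(K-1)`
    ∀ P : ℝ, 0 < P →
      (P / K) * (1 + ∫ x : Fin K → ℝ,
        (∑ k ∈ Finset.univ.erase (⟨0, by omega⟩ : Fin K),
          orderStat x ⟨0, by omega⟩ / orderStat x k) ∂(muK K)) =
      P * Real.log K / ((K : ℝ) - 1) := by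
  obtain ⟨n, rfl⟩ : ∃ n, K = n + 1 := ⟨K - 1, by omega⟩
  have hn : 0 < n := by omega
  have hnR : (0:ℝ) < n := by exact_mod_cast hn
  set F : (Fin (n+1) → ℝ) → ℝ := fun x =>
    ∑ k ∈ Finset.univ.erase (⟨0, by omega⟩ : Fin (n+1)),
      orderStat x ⟨0, by omega⟩ / orderStat x k with hFdef
  set G : (Fin (n+1) → ℝ) → ℝ := fun x => (∑ j, hfun j x) - 1 with hGdef
  have hFG : F =ᵐ[muK (n+1)] G := by
    filter_upwards [muK_pos_ae (n+1)] with x hx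
    have hm : 0 < mmin x := by obtain ⟨j, hj⟩ := exists_mmin x; rw [hj]; exact hx j
    have h1 : F x = (∑ k, orderStat x ⟨0, by omega⟩ / orderStat x k)
        - orderStat x ⟨0, by omega⟩ / orderStat x (⟨0, by omega⟩ : Fin (n+1)) := by
      rw [hFdef]
      exact Finset.sum_erase_eq_sub (mem_univ _)
    rw [h1, orderStat_zero, sum_orderStat, div_self hm.ne']
    rfl
  have hGint : Integrable G (muK (n+1)) := by
    apply Integrable.sub
    · exact integrable_finset_sum _ (fun i _ => integrable_hfun i)
    · exact integrable_const 1
  have hGval : ∫ x, G x ∂(muK (n+1)) = ((n:ℝ)+1) * (Real.log (n+1) / n) - 1 := by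
    rw [hGdef]
    simp only
    rw [integral_sub (integrable_finset_sum _ (fun i _ => integrable_hfun i)) (integrable_const 1),
      integral_finset_sum _ (fun i _ => integrable_hfun i)]
    simp only [integral_hfun hn]
    rw [Finset.sum_const, Finset.card_univ, Fintype.card_fin]
    simp only [integral_const, measure_univ, ENNReal.toReal_one, probReal_univ, smul_eq_mul, one_mul, nsmul_eq_mul]
    push_cast
    ring
  have hFint : Integrable F (muK (n+1)) := hGint.congr hFG.symm
  have hFval : ∫ x, F x ∂(muK (n+1)) = ((n:ℝ)+1) * (Real.log (n+1) / n) - 1 := by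
    rw [integral_congr_ae hFG, hGval]
  refine ⟨hFint, ?_, ?_⟩
  · rw [hFval]
    have : ((n+1:ℕ):ℝ) = (n:ℝ)+1 := by push_cast; ring
    rw [this]
    field_simp
    rw [show (n:ℝ)+1-1 = n by ring, mul_div_cancel_left₀ _ hnR.ne']
  · intro P hP
    rw [hFval]
    have : ((n+1:ℕ):ℝ) = (n:ℝ)+1 := by push_cast; ring
    rw [this]
    have h1 : (n:ℝ)+1-1 = n := by ring
    rw [h1]
    field_simp
    ring
end

section
/- For every i ∈ {1,…,K−1} and every a ∈ 𝒮_i, the minimized computation MSE satisfies the strict lower bound f_i(a) > ∑_{k=1}^i (h_k/h_i − 1)² + σ²/(P·h_{i+1}²). -/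
open Finset

theorem stmt_16 (K : ℕ) (hK : 1 ≤ K) (h : ℕ → ℝ) (P σ : ℝ) (hP : 0 < P) (hσ : 0 < σ)
    (hpos : 0 < h 1) (hmono : ∀ k, 1 ≤ k → k < K → h k ≤ h (k + 1))
    (i : ℕ) (hi1 : 1 ≤ i) (hiK : i ≤ K - 1) (a : ℝ) (ha : memS K h P i a) :
    (∑ k ∈ Finset.Icc 1 i, (h k / h i - 1) ^ 2) + σ ^ 2 / (P * (h (i + 1)) ^ 2) <
      f h P σ i a := by
  have hsP : 0 < Real.sqrt P := Real.sqrt_pos.mpr hP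
  have hmono' : ∀ k l, 1 ≤ k → k ≤ l → l ≤ K → h k ≤ h l := by
    intro k l hk hkl hlK
    induction l with
    | zero => omega
    | succ n ih =>
      rcases Nat.eq_or_lt_of_le hkl with rfl | hlt
      · exact le_refl _
      · exact (ih (by omega) (by omega)).trans (hmono n (by omega) (by omega))
  have hiK' : i + 1 ≤ K := by omega
  have hposk : ∀ k, 1 ≤ k → k ≤ K → 0 < h k := fun k hk hkK =>
    lt_of_lt_of_le hpos (hmono' 1 k le_rfl hk hkK)
  have hhi : 0 < h i := hposk i hi1 (by omega)
  have hhi1 : 0 < h (i + 1) := hposk (i + 1) (by omega) hiK'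
  obtain ⟨ha1, ha2⟩ := ha
  rw [if_neg (by omega : ¬ i = K)] at ha1
  rw [if_neg (by omega : ¬ i = 0)] at ha2
  have hapos : 0 < a := lt_trans (by positivity) ha1
  have hsum : (∑ k ∈ Icc 1 i, (h k / h i - 1) ^ 2)
      ≤ ∑ k ∈ Icc 1 i, (a * h k * Real.sqrt P - 1) ^ 2 := by
    apply Finset.sum_le_sum
    intro k hk
    rw [Finset.mem_Icc] at hk
    have hhk : 0 < h k := hposk k hk.1 (by omega)
    have hki : h k ≤ h i := hmono' k i hk.1 hk.2 (by omega)
    have h1 : a * h k * Real.sqrt P ≤ h k / h i := by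
      have := mul_le_mul_of_nonneg_right ha2
        (by positivity : (0:ℝ) ≤ h k * Real.sqrt P)
      calc a * h k * Real.sqrt P = a * (h k * Real.sqrt P) := by ring
        _ ≤ 1 / (h i * Real.sqrt P) * (h k * Real.sqrt P) := this
        _ = h k / h i := by field_simp
    have h2 : h k / h i ≤ 1 := by rw [div_le_one hhi]; exact hki
    have key := pow_le_pow_left₀ (by linarith : (0:ℝ) ≤ 1 - h k / h i)
      (by linarith : 1 - h k / h i ≤ 1 - a * h k * Real.sqrt P) 2
    calc (h k / h i - 1) ^ 2 = (1 - h k / h i) ^ 2 := by ring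
      _ ≤ (1 - a * h k * Real.sqrt P) ^ 2 := key
      _ = (a * h k * Real.sqrt P - 1) ^ 2 := by ring
  have hlast : σ ^ 2 / (P * (h (i + 1)) ^ 2) < σ ^ 2 * a ^ 2 := by
    have hb : (0:ℝ) < 1 / (h (i + 1) * Real.sqrt P) := by positivity
    have hsq : (1 / (h (i + 1) * Real.sqrt P)) ^ 2 < a ^ 2 := by
      apply pow_lt_pow_left₀ ha1 hb.le
      omega
    calc σ ^ 2 / (P * (h (i + 1)) ^ 2)
        = σ ^ 2 * (1 / (h (i + 1) * Real.sqrt P)) ^ 2 := by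
          rw [div_pow, one_pow, mul_pow, Real.sq_sqrt hP.le]; ring
      _ < σ ^ 2 * a ^ 2 := by
          exact mul_lt_mul_of_pos_left hsq (by positivity)
  unfold f
  exact add_lt_add_of_le_of_lt hsum hlast
end
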